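/- Completeness of the Call-by-Name unbiased strategy with respect to normal forms: if N is a β-normal λ-term and M →β* N, then M ⊳* N (where * denotes reflexive-transitive closure). -/

import Mathlib

/-! Standardization, following Kashima. A reduction `M →β* N` can be rearranged into a
standard one: weak head steps `M →wh* x`, `λA` or `A B`, followed by standard reductions of
the components. Standard reductions are preserved by lifting and substitution, which is what
lets a β-step be appended to one, also when it contracts a redex created along the way.

If `N` is β-normal, a standard reduction to `N` is a `⊳`-reduction. Weak head steps are head
steps. In the case `A B →β* A' B'`, the normal form `A'` is not an abstraction, hence no term
along `A →β* A'` is one (abstractions reduce to abstractions); so each step of `A` is a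
`⊳`-step of `A B`, either a head step or one taken when `A B` has no head redex. Finally `A' B`
has no head redex, and `⊳` may reduce `B`. -/

/-- Untyped λ-terms in de Bruijn representation. -/
inductive Tm : Type
  | var : ℕ → Tm
  | lam : Tm → Tm
  | app : Tm → Tm → Tm
deriving DecidableEq

namespace Tm

/-- Lift (shift by one) the free variables of index `≥ d`. -/
def lift (d : ℕ) : Tm → Tm
  | var n => if n < d then var n else var (n + 1)
  | lam M => lam (lift (d + 1) M)
  | app M N => app (lift d M) (lift d N)

/-- Capture-avoiding substitution `M[N/k]` of `N` for the free variable `k` in `M`. -/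
def subst : Tm → ℕ → Tm → Tm
  | var n, k, N => if n = k then N else if k < n then var (n - 1) else var n
  | lam M, k, N => lam (subst M (k + 1) (lift 0 N))
  | app M₁ M₂, k, N => app (subst M₁ k N) (subst M₂ k N)

end Tm

/-- β-reduction: the closure of the root rule `(λx.M)N ↦β M[N/x]` under arbitrary contexts. -/
inductive Beta : Tm → Tm → Prop
  | beta (M N : Tm) : Beta (Tm.app (Tm.lam M) N) (M.subst 0 N)
  | lam {M M'} : Beta M M' → Beta (Tm.lam M) (Tm.lam M')
  | appL {M M' N} : Beta M M' → Beta (Tm.app M N) (Tm.app M' N)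
  | appR {M N N'} : Beta N N' → Beta (Tm.app M N) (Tm.app M N')

/-- Head reduction: the closure of `↦β` under head contexts `H ::= ⟨⟩ | λx.H | H M`. -/
inductive Head : Tm → Tm → Prop
  | beta (M N : Tm) : Head (Tm.app (Tm.lam M) N) (M.subst 0 N)
  | lam {M M'} : Head M M' → Head (Tm.lam M) (Tm.lam M')
  | appL {M M' N} : Head M M' → Head (Tm.app M N) (Tm.app M' N)

/-- The unbiased strategy `⊳`: perform head steps as long as possible; once the term has
no head redex, iterate in the subterms (in arbitrary order). -/
inductive Unb : Tm → Tm → Prop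
  | head {M M'} : Head M M' → Unb M M'
  | lam {P P'} : (∀ s, ¬ Head (Tm.lam P) s) → Unb P P' → Unb (Tm.lam P) (Tm.lam P')
  | appL {P P' Q} : (∀ s, ¬ Head (Tm.app P Q) s) → Unb P P' →
      Unb (Tm.app P Q) (Tm.app P' Q)
  | appR {P Q Q'} : (∀ s, ¬ Head (Tm.app P Q) s) → Unb Q Q' →
      Unb (Tm.app P Q) (Tm.app P Q')

/-- `M` is β-normal: it has no `→β`-successor. -/
def BetaNormal (M : Tm) : Prop := ∀ N, ¬ Beta M N

namespace Tm

theorem lift_lift_of_le (M : Tm) {i j : ℕ} (h : i ≤ j) :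
    lift i (lift j M) = lift (j + 1) (lift i M) := by
  induction M generalizing i j with
  | var n => grind [lift]
  | lam M ih => simp only [lift, ih (Nat.succ_le_succ h)]
  | app M N ihM ihN => simp only [lift, ihM h, ihN h]

theorem lift_subst_of_le (M N : Tm) {d k : ℕ} (h : k ≤ d) :
    lift d (M.subst k N) = (lift (d + 1) M).subst k (lift d N) := by
  induction M generalizing d k N with
  | var n => grind [lift, subst]
  | lam M ih =>
    simp only [lift, subst, ih _ (Nat.succ_le_succ h), lift_lift_of_le N (Nat.zero_le d)]
  | app M₁ M₂ ih₁ ih₂ => simp only [lift, subst, ih₁ _ h, ih₂ _ h]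

theorem lift_subst_of_ge (M N : Tm) {d k : ℕ} (h : d ≤ k) :
    lift d (M.subst k N) = (lift d M).subst (k + 1) (lift d N) := by
  induction M generalizing d k N with
  | var n => grind [lift, subst]
  | lam M ih =>
    simp only [lift, subst, ih _ (Nat.succ_le_succ h), lift_lift_of_le N (Nat.zero_le d)]
  | app M₁ M₂ ih₁ ih₂ => simp only [lift, subst, ih₁ _ h, ih₂ _ h]

theorem subst_lift (M N : Tm) (d : ℕ) : (lift d M).subst d N = M := by
  induction M generalizing d N with
  | var n => grind [lift, subst]
  | lam M ih => simp only [lift, subst, ih]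
  | app M₁ M₂ ih₁ ih₂ => simp only [lift, subst, ih₁, ih₂]

theorem subst_subst_of_le (M B N : Tm) {i k : ℕ} (h : i ≤ k) :
    (M.subst i B).subst k N = (M.subst (k + 1) (lift i N)).subst i (B.subst k N) := by
  induction M generalizing i k B N with
  | var n => grind [subst, subst_lift]
  | lam M ih =>
    simp only [subst, ih _ _ (Nat.succ_le_succ h), lift_lift_of_le N (Nat.zero_le i),
      lift_subst_of_ge B N (Nat.zero_le k)]
  | app M₁ M₂ ih₁ ih₂ => simp only [subst, ih₁ _ _ h, ih₂ _ _ h]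

end Tm

open Tm Relation

inductive WeakHead : Tm → Tm → Prop
  | beta (M N : Tm) : WeakHead (app (lam M) N) (M.subst 0 N)
  | appL {M M' N : Tm} : WeakHead M M' → WeakHead (app M N) (app M' N)

/-- Kashima's inductive characterisation of standard reductions. -/
inductive Standard : Tm → Tm → Prop
  | var {M : Tm} {n : ℕ} : ReflTransGen WeakHead M (var n) → Standard M (var n)
  | lam {M A A' : Tm} : ReflTransGen WeakHead M (lam A) → Standard A A' → Standard M (lam A')
  | app {M A B A' B' : Tm} : ReflTransGen WeakHead M (app A B) → Standard A A' →
      Standard B B' → Standard M (app A' B')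

namespace WeakHead

theorem head {M M' : Tm} (h : WeakHead M M') : Head M M' := by
  induction h with
  | beta M N => exact .beta M N
  | appL _ ih => exact .appL ih

theorem lift {M M' : Tm} (d : ℕ) (h : WeakHead M M') : WeakHead (M.lift d) (M'.lift d) := by
  induction h with
  | beta A B => simpa only [Tm.lift, lift_subst_of_le A B (Nat.zero_le d)] using .beta _ _
  | appL _ ih => exact .appL ih

theorem subst {M M' : Tm} (k : ℕ) (N : Tm) (h : WeakHead M M') :
    WeakHead (M.subst k N) (M'.subst k N) := by
  induction h with
  | beta A B => simpa only [Tm.subst, subst_subst_of_le A B N (Nat.zero_le k)] using .beta _ _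
  | appL _ ih => exact .appL ih

theorem reflTransGen_lift {M M' : Tm} (d : ℕ) (h : ReflTransGen WeakHead M M') :
    ReflTransGen WeakHead (M.lift d) (M'.lift d) :=
  ReflTransGen.lift (Tm.lift d) (fun _ _ => WeakHead.lift d) _ _ h

theorem reflTransGen_subst {M M' : Tm} (k : ℕ) (N : Tm) (h : ReflTransGen WeakHead M M') :
    ReflTransGen WeakHead (M.subst k N) (M'.subst k N) :=
  ReflTransGen.lift (Tm.subst · k N) (fun _ _ => WeakHead.subst k N) _ _ h

theorem reflTransGen_appL {M M' : Tm} (N : Tm) (h : ReflTransGen WeakHead M M') :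
    ReflTransGen WeakHead (app M N) (app M' N) :=
  ReflTransGen.lift (app · N) (fun _ _ => WeakHead.appL) _ _ h

end WeakHead

namespace Standard

theorem refl (M : Tm) : Standard M M := by
  induction M with
  | var n => exact .var .refl
  | lam A ih => exact .lam .refl ih
  | app A B ihA ihB => exact .app .refl ihA ihB

theorem weakHead_trans {M M' N : Tm} (h : ReflTransGen WeakHead M M') (h' : Standard M' N) :
    Standard M N := by
  cases h' with
  | var h'' => exact .var (h.trans h'')
  | lam h'' hA => exact .lam (h.trans h'') hA
  | app h'' hA hB => exact .app (h.trans h'') hA hB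

theorem lift {M M' : Tm} (h : Standard M M') (d : ℕ) : Standard (M.lift d) (M'.lift d) := by
  induction h generalizing d with
  | var hM =>
    have hM' := WeakHead.reflTransGen_lift d hM
    simp only [Tm.lift] at hM' ⊢
    split_ifs at hM' ⊢ <;> exact .var hM'
  | lam hM _ ih => exact .lam (by simpa only [Tm.lift] using WeakHead.reflTransGen_lift d hM) (ih _)
  | app hM _ _ ihA ihB =>
    exact .app (by simpa only [Tm.lift] using WeakHead.reflTransGen_lift d hM) (ihA d) (ihB d)

theorem subst {M M' N N' : Tm} (h : Standard M M') (hN : Standard N N') (k : ℕ) :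
    Standard (M.subst k N) (M'.subst k N') := by
  induction h generalizing N N' k with
  | var hM =>
    have hM' := WeakHead.reflTransGen_subst k N hM
    simp only [Tm.subst] at hM' ⊢
    split_ifs at hM' ⊢
    · exact weakHead_trans hM' hN
    all_goals exact .var hM'
  | lam hM _ ih =>
    have hM' := WeakHead.reflTransGen_subst k N hM
    simp only [Tm.subst] at hM' ⊢
    exact weakHead_trans hM' (.lam .refl (ih (hN.lift 0) _))
  | app hM _ _ ihA ihB =>
    have hM' := WeakHead.reflTransGen_subst k N hM
    simp only [Tm.subst] at hM' ⊢
    exact weakHead_trans hM' (.app .refl (ihA hN k) (ihB hN k))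

theorem tail_beta {M M' M'' : Tm} (h : Standard M M') (hβ : Beta M' M'') : Standard M M'' := by
  induction h generalizing M'' with
  | var _ => cases hβ
  | lam hM _ ih =>
    cases hβ with
    | lam hβ => exact .lam hM (ih hβ)
  | app hM hA hB ihA ihB =>
    cases hβ with
    | appL hβ => exact .app hM (ihA hβ) hB
    | appR hβ => exact .app hM hA (ihB hβ)
    | beta C D =>
      -- `A` weak-head reduces to some `λC₀` with `C₀` standard to `C`; then
      -- `M →wh* A B →wh* (λC₀) B →wh C₀[B/0]`, and substitution preserves standardness
      cases hA with
      | lam hA hC =>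
        exact weakHead_trans (hM.trans ((WeakHead.reflTransGen_appL _ hA).tail (.beta _ _)))
          (hC.subst hB 0)

theorem of_reflTransGen_beta {M N : Tm} (h : ReflTransGen Beta M N) : Standard M N := by
  induction h with
  | refl => exact refl M
  | tail _ hβ ih => exact ih.tail_beta hβ

end Standard

theorem Head.to_beta {M M' : Tm} (h : Head M M') : Beta M M' := by
  induction h with
  | beta M N => exact .beta M N
  | lam _ ih => exact .lam ih
  | appL _ ih => exact .appL ih

namespace BetaNormal

theorem of_lam {A : Tm} (h : BetaNormal (lam A)) : BetaNormal A :=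
  fun _ hβ => h _ (.lam hβ)

theorem app_left {A B : Tm} (h : BetaNormal (app A B)) : BetaNormal A :=
  fun _ hβ => h _ (.appL hβ)

theorem app_right {A B : Tm} (h : BetaNormal (app A B)) : BetaNormal B :=
  fun _ hβ => h _ (.appR hβ)

theorem app_left_ne_lam {A B : Tm} (h : BetaNormal (app A B)) (C : Tm) : A ≠ lam C := by
  rintro rfl
  exact h _ (.beta C B)

end BetaNormal

theorem exists_eq_lam_of_reflTransGen_beta {A X : Tm} (h : ReflTransGen Beta (lam A) X) :
    ∃ B, X = lam B := by
  induction h with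
  | refl => exact ⟨A, rfl⟩
  | tail _ hβ ih =>
    obtain ⟨B, rfl⟩ := ih
    cases hβ
    exact ⟨_, rfl⟩

namespace Unb

theorem to_beta {M M' : Tm} (h : Unb M M') : Beta M M' := by
  induction h with
  | head h => exact h.to_beta
  | lam _ _ ih => exact .lam ih
  | appL _ _ ih => exact .appL ih
  | appR _ _ ih => exact .appR ih

theorem head_or_forall_not_head {M M' : Tm} (h : Unb M M') : Head M M' ∨ ∀ s, ¬ Head M s := by
  cases h with
  | head h => exact .inl h
  | lam h0 _ | appL h0 _ | appR h0 _ => exact .inr h0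

theorem lam_congr {A A' : Tm} (h : Unb A A') : Unb (Tm.lam A) (Tm.lam A') := by
  rcases h.head_or_forall_not_head with hA | hA
  · exact .head (.lam hA)
  · refine .lam (fun s hs => ?_) h
    cases hs with
    | lam hs => exact hA _ hs

theorem appL_congr {A A' : Tm} (B : Tm) (h : Unb A A') (hA : ∀ C, A ≠ Tm.lam C) :
    Unb (Tm.app A B) (Tm.app A' B) := by
  rcases h.head_or_forall_not_head with hAh | hAh
  · exact .head (.appL hAh)
  · refine .appL (fun s hs => ?_) h
    cases hs with
    | beta C _ => exact hA C rfl
    | appL hs => exact hAh _ hs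

theorem reflTransGen_lam {A A' : Tm} (h : ReflTransGen Unb A A') :
    ReflTransGen Unb (Tm.lam A) (Tm.lam A') :=
  ReflTransGen.lift Tm.lam (fun _ _ => lam_congr) _ _ h

theorem reflTransGen_appL {A A' : Tm} (B : Tm) (h : ReflTransGen Unb A A')
    (hA' : ∀ C, A' ≠ Tm.lam C) : ReflTransGen Unb (Tm.app A B) (Tm.app A' B) := by
  induction h using ReflTransGen.head_induction_on with
  | refl => exact .refl
  | head hstep hrest ih =>
    refine .head (appL_congr B hstep fun C hC => ?_) ih
    subst hC
    have hβ : ReflTransGen Beta (Tm.lam C) A' :=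
      .head hstep.to_beta (ReflTransGen.lift id (fun _ _ => to_beta) _ _ hrest)
    obtain ⟨E, hE⟩ := exists_eq_lam_of_reflTransGen_beta hβ
    exact hA' E hE

theorem reflTransGen_appR {A B B' : Tm} (hA : BetaNormal A) (hA' : ∀ C, A ≠ Tm.lam C)
    (h : ReflTransGen Unb B B') : ReflTransGen Unb (Tm.app A B) (Tm.app A B') := by
  refine ReflTransGen.lift (Tm.app A) (fun _ _ hB => .appR (fun s hs => ?_) hB) _ _ h
  cases hs with
  | beta C _ => exact hA' C rfl
  | appL hs => exact hA _ hs.to_beta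

end Unb

theorem Standard.reflTransGen_unb {M N : Tm} (h : Standard M N) (hN : BetaNormal N) :
    ReflTransGen Unb M N := by
  have ofWeakHead {X Y : Tm} (h : ReflTransGen WeakHead X Y) : ReflTransGen Unb X Y :=
    ReflTransGen.lift id (fun _ _ hXY => Unb.head hXY.head) _ _ h
  induction h with
  | var hM => exact ofWeakHead hM
  | lam hM _ ih => exact (ofWeakHead hM).trans (Unb.reflTransGen_lam (ih hN.of_lam))
  | app hM _ _ ihA ihB =>
    exact (ofWeakHead hM).trans <|
      (Unb.reflTransGen_appL _ (ihA hN.app_left) hN.app_left_ne_lam).trans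
        (Unb.reflTransGen_appR hN.app_left hN.app_left_ne_lam (ihB hN.app_right))

/-- **Completeness of the Call-by-Name unbiased strategy w.r.t. normal forms**:
if `N` is β-normal and `M →β* N`, then `M ⊳* N`. -/
theorem cbn_unbiased_complete (M N : Tm) (hN : BetaNormal N)
    (h : Relation.ReflTransGen Beta M N) : Relation.ReflTransGen Unb M N :=
  (Standard.of_reflTransGen_beta h).reflTransGen_unb hN
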